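/- arXiv:2006.13505 — 2 statements merged into one kernel-verified Lean document; each statement's English description precedes it below -/
import Mathlib

section
/- Let V̂_p, V_c: [0,∞) → ℝ be differentiable, and let Ŷ_p, Y_c, Û_p, U_c: [0,∞) → ℝ^{lm} be differentiable, with the closed-loop interconnection conditions Û_p(t) = Y_c(t) and U_c(t) = Ŷ_p(t) for all t. Suppose V̂_p'(t) ≤ Û_p(t)ᵀ Ŷ_p'(t) and V_c'(t) ≤ U_c(t)ᵀ Y_c'(t) - ε|Y_c'(t)|² for some ε > 0. Then the function W(t) = V̂_p(t) + V_c(t) - Ŷ_p(t)ᵀ Y_c(t) satisfies W'(t) ≤ -ε|Y_c'(t)|² ≤ 0 for all t ≥ 0. -/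
open Matrix

lemma dot_hasDerivAt {d : ℕ} {f g : ℝ → (Fin d → ℝ)} {t : ℝ}
    (hf : Differentiable ℝ f) (hg : Differentiable ℝ g) :
    HasDerivAt (fun s => f s ⬝ᵥ g s) (deriv f t ⬝ᵥ g t + f t ⬝ᵥ deriv g t) t := by
  have hf' : ∀ i, HasDerivAt (fun s => f s i) (deriv f t i) t :=
    hasDerivAt_pi.mp (hf t).hasDerivAt
  have hg' : ∀ i, HasDerivAt (fun s => g s i) (deriv g t i) t :=
    hasDerivAt_pi.mp (hg t).hasDerivAt
  have : HasDerivAt (fun s => ∑ i, f s i * g s i)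
      (∑ i, (deriv f t i * g t i + f t i * deriv g t i)) t :=
    HasDerivAt.fun_sum fun i _ => (hf' i).mul (hg' i)
  simpa [dotProduct, Finset.sum_add_distrib] using this

theorem stmt_7 (d : ℕ) (Vp Vc : ℝ → ℝ) (Yp Yc Up Uc : ℝ → (Fin d → ℝ))
    (hVp : Differentiable ℝ Vp) (hVc : Differentiable ℝ Vc)
    (hYp : Differentiable ℝ Yp) (hYc : Differentiable ℝ Yc)
    (hconn1 : ∀ t, Up t = Yc t) (hconn2 : ∀ t, Uc t = Yp t)
    (ε : ℝ) (hε : 0 < ε)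
    (hNI : ∀ t : ℝ, 0 ≤ t → deriv Vp t ≤ Up t ⬝ᵥ deriv Yp t)
    (hOSNI : ∀ t : ℝ, 0 ≤ t →
      deriv Vc t ≤ Uc t ⬝ᵥ deriv Yc t - ε * (deriv Yc t ⬝ᵥ deriv Yc t)) :
    ∀ t : ℝ, 0 ≤ t →
      deriv (fun s => Vp s + Vc s - Yp s ⬝ᵥ Yc s) t ≤ -ε * (deriv Yc t ⬝ᵥ deriv Yc t) ∧
      deriv (fun s => Vp s + Vc s - Yp s ⬝ᵥ Yc s) t ≤ 0 := by
  intro t ht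
  have hdot := dot_hasDerivAt (f := Yp) (g := Yc) (t := t) hYp hYc
  have hW : HasDerivAt (fun s => Vp s + Vc s - Yp s ⬝ᵥ Yc s)
      (deriv Vp t + deriv Vc t - (deriv Yp t ⬝ᵥ Yc t + Yp t ⬝ᵥ deriv Yc t)) t :=
    (((hVp t).hasDerivAt.add (hVc t).hasDerivAt).sub hdot)
  have h1 : deriv (fun s => Vp s + Vc s - Yp s ⬝ᵥ Yc s) t ≤
      -ε * (deriv Yc t ⬝ᵥ deriv Yc t) := by
    rw [hW.deriv]
    have hp := hNI t ht
    have hc := hOSNI t ht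
    rw [hconn1 t] at hp
    rw [hconn2 t] at hc
    have e1 : Yc t ⬝ᵥ deriv Yp t = deriv Yp t ⬝ᵥ Yc t := dotProduct_comm _ _
    nlinarith [hp, hc]
  refine ⟨h1, h1.trans ?_⟩
  have : 0 ≤ deriv Yc t ⬝ᵥ deriv Yc t := Finset.sum_nonneg fun i _ => mul_self_nonneg _
  nlinarith
end

section
/- The scalar controller system ẋ = -βx - φx³ + αu, y = x, with constants α, β, φ > 0, is nonlinear OSNI with storage function V(x) = (β/(2α))x² + (φ/(4α))x⁴ and strictness level ε for any 0 < ε ≤ 1/α: for all x, u ∈ ℝ, V'(x)·(-βx - φx³ + αu) - u·(-βx - φx³ + αu) + ε·(-βx - φx³ + αu)² ≤ 0. Moreover V is positive definite. -/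
theorem stmt_9 (α β φ : ℝ) (hα : 0 < α) (hβ : 0 < β) (hφ : 0 < φ)
    (ε : ℝ) (hε : 0 < ε) (hεα : ε ≤ 1 / α)
    (V : ℝ → ℝ) (hV : ∀ x, V x = β / (2 * α) * x ^ 2 + φ / (4 * α) * x ^ 4) :
    (∀ x u : ℝ,
      deriv V x * (-β * x - φ * x ^ 3 + α * u)
        - u * (-β * x - φ * x ^ 3 + α * u)
        + ε * (-β * x - φ * x ^ 3 + α * u) ^ 2 ≤ 0) ∧
    (V 0 = 0 ∧ ∀ x : ℝ, x ≠ 0 → 0 < V x) := by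
  have hVe : V = fun x => β / (2 * α) * x ^ 2 + φ / (4 * α) * x ^ 4 := funext hV
  have hderiv : ∀ x : ℝ, deriv V x = β / α * x + φ / α * x ^ 3 := by
    intro x
    rw [hVe]
    have h1 : HasDerivAt (fun x : ℝ => β / (2 * α) * x ^ 2 + φ / (4 * α) * x ^ 4)
        (β / (2 * α) * (2 * x) + φ / (4 * α) * (4 * x ^ 3)) x := by
      have := ((hasDerivAt_pow 2 x).const_mul (β / (2 * α))).add
        ((hasDerivAt_pow 4 x).const_mul (φ / (4 * α)))
      exact this.congr_deriv (by norm_num)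
    rw [h1.deriv]
    field_simp
  constructor
  · intro x u
    rw [hderiv]
    have hεα' : ε * α ≤ 1 := by
      have := (le_div_iff₀ hα).mp hεα
      linarith
    have key : β / α * x + φ / α * x ^ 3 = (β * x + φ * x ^ 3) / α := by ring
    rw [key]
    have hne : α ≠ 0 := ne_of_gt hα
    have expand : (β * x + φ * x ^ 3) / α * (-β * x - φ * x ^ 3 + α * u)
        - u * (-β * x - φ * x ^ 3 + α * u)
        + ε * (-β * x - φ * x ^ 3 + α * u) ^ 2
        = (ε - 1 / α) * (β * x + φ * x ^ 3 - α * u) ^ 2 := by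
      field_simp
      ring
    rw [expand]
    have : ε - 1 / α ≤ 0 := by linarith
    nlinarith [sq_nonneg (β * x + φ * x ^ 3 - α * u)]
  · constructor
    · rw [hV]; ring
    · intro x hx
      rw [hV]
      have h2 : 0 < x ^ 2 := by positivity
      have h4 : 0 < x ^ 4 := by positivity
      have : 0 < β / (2 * α) := by positivity
      have : 0 < φ / (4 * α) := by positivity
      positivity
end
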